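/- arXiv:1409.7510 — 2 statements merged into one kernel-verified Lean document; each statement's English description precedes it below -/
import Mathlib

section
/- If a morphism φ: A* → A* is acyclic, then φ has a leftmost conjugate and a rightmost conjugate. -/
/-- `k`-fold concatenation of a word with itself. -/
def listPow {A : Type*} (l : List A) : ℕ → List A
  | 0 => []
  | n + 1 => l ++ listPow l n

/-- Application of a morphism (given by its images of letters) to a word. -/
def wordMap {A : Type*} (φ : A → List A) (x : List A) : List A :=
  x.flatMap φ

/-- `k`-th power (iterate) of a morphism. -/
def morPow {A : Type*} (φ : A → List A) : ℕ → A → List A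
  | 0 => fun a => [a]
  | k + 1 => fun a => wordMap (morPow φ k) (φ a)

/-- `φ` is a right conjugate of `ψ` (notation `ψ ▷ φ`):
there is a word `w` with `w ψ(x) = φ(x) w` for all `x`. -/
def IsRightConjOf {A : Type*} (φ ψ : A → List A) : Prop :=
  ∃ w : List A, ∀ a : A, w ++ ψ a = φ a ++ w

/-- `φ` and `ψ` are conjugate morphisms. -/
def AreConjugates {A : Type*} (φ ψ : A → List A) : Prop :=
  IsRightConjOf φ ψ ∨ IsRightConjOf ψ φ

/-- `φL` is the leftmost conjugate of `φ`. -/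
def IsLeftmostConjOf {A : Type*} (φL φ : A → List A) : Prop :=
  IsRightConjOf φ φL ∧ ∀ ψ : A → List A, IsRightConjOf φL ψ → ψ = φL

/-- `φR` is the rightmost conjugate of `φ`. -/
def IsRightmostConjOf {A : Type*} (φR φ : A → List A) : Prop :=
  IsRightConjOf φR φ ∧ ∀ ψ : A → List A, IsRightConjOf ψ φR → ψ = φR

/-- A morphism is cyclic if all images of letters are powers of a common word. -/
def CyclicMorphism {A : Type*} (φ : A → List A) : Prop :=
  ∃ w : List A, ∀ a : A, ∃ n : ℕ, φ a = listPow w n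

/-- First letter of the image of each letter. -/
def Fst {A : Type*} (φ : A → List A) : A → Option A :=
  fun a => (φ a).head?

/-- Last letter of the image of each letter. -/
def Lst {A : Type*} (φ : A → List A) : A → Option A :=
  fun a => (φ a).getLast?

/-- A morphism is in class P if there is a palindrome `p` which is a prefix of
every `φ(α)` and such that `φ(α) p` is a palindrome for every letter `α`. -/
def IsClassP {A : Type*} (φ : A → List A) : Prop :=
  ∃ p : List A, p.reverse = p ∧
    ∀ a : A, p <+: φ a ∧ (φ a ++ p).reverse = φ a ++ p

/-- The finite word `v` is a factor of the infinite word `u`. -/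
def IsFactor {A : Type*} (u : ℕ → A) (v : List A) : Prop :=
  ∃ i : ℕ, v = (List.range v.length).map fun j => u (i + j)

/-- An infinite word is uniformly recurrent if every factor occurs in every
sufficiently long factor. -/
def UnifRecurrent {A : Type*} (u : ℕ → A) : Prop :=
  ∀ v : List A, IsFactor u v → ∃ n : ℕ,
    ∀ f : List A, IsFactor u f → f.length = n → v <:+: f

/-- An infinite word is eventually periodic. -/
def EventuallyPeriodic {A : Type*} (u : ℕ → A) : Prop :=
  ∃ p : ℕ, 0 < p ∧ ∃ N : ℕ, ∀ n : ℕ, N ≤ n → u (n + p) = u n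

/-- A factor `v` is right special in `u`. -/
def RightSpecial {A : Type*} (u : ℕ → A) (v : List A) : Prop :=
  ∃ x y : A, x ≠ y ∧ IsFactor u (v ++ [x]) ∧ IsFactor u (v ++ [y])

/-- A factor `v` is left special in `u`. -/
def LeftSpecial {A : Type*} (u : ℕ → A) (v : List A) : Prop :=
  ∃ x y : A, x ≠ y ∧ IsFactor u (x :: v) ∧ IsFactor u (y :: v)

/-!
The words `w` with `w ψ(a) = φ(a) w` for all letters `a` are exactly the common prefixes of the
words `φ(a) w`. If there are arbitrarily long ones, then each is a prefix of every `φ(a)^ω`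
(for `φ(a)` nonempty), so these infinite powers coincide in one infinite word `u` having every
`|φ(a)|` as a period. The least period `d` of `u` divides every period, hence every `φ(a)` is a
power of the prefix of length `d` of `u`, and `φ` is cyclic. Otherwise a longest such `w` yields
the leftmost conjugate, as any further left conjugation would lengthen it. The rightmost conjugate
is obtained by reversing all images.
-/

namespace Function.Periodic

variable {α : Type*} {u : ℕ → α} {p q : ℕ}

theorem nat_mod (hp : Periodic u p) (hq : Periodic u q) : Periodic u (q % p) := fun n => by
  calc u (n + q % p) = u (n + q % p + q / p * p) := (hp.nat_mul _ _).symm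
    _ = u (n + q) := by rw [add_assoc, Nat.mod_add_div']
    _ = u n := hq n

theorem exists_period_forall_dvd (hp : Periodic u p) (hp0 : 0 < p) :
    ∃ d, 0 < d ∧ Periodic u d ∧ ∀ q, Periodic u q → d ∣ q := by
  classical
  have hex : ∃ d, 0 < d ∧ Periodic u d := ⟨p, hp0, hp⟩
  obtain ⟨hd0, hd⟩ := Nat.find_spec hex
  refine ⟨Nat.find hex, hd0, hd, fun q hq => Nat.dvd_of_mod_eq_zero ?_⟩
  by_contra hmod
  have hmin := Nat.find_min' hex ⟨Nat.pos_of_ne_zero hmod, hd.nat_mod hq⟩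
  exact absurd (Nat.mod_lt q hd0) (not_lt.2 hmin)

theorem map_range_mul_eq_listPow (hp : Periodic u p) (k : ℕ) :
    (List.range (k * p)).map u = listPow ((List.range p).map u) k := by
  induction k with
  | zero => simp [listPow]
  | succ k ih =>
    rw [Nat.succ_mul, add_comm, List.range_add, List.map_append, List.map_map, listPow, ← ih]
    congr 2
    funext n
    exact (congrArg u (add_comm p n)).trans (hp n)

end Function.Periodic

open Function

theorem exists_forall_map_range_eq_listPow {α ι : Type*} (u : ℕ → α) (L : ι → ℕ)
    (hL : ∀ i, Periodic u (L i)) :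
    ∃ r : List α, ∀ i, ∃ k, (List.range (L i)).map u = listPow r k := by
  by_cases hzero : ∀ i, L i = 0
  · exact ⟨[], fun i => ⟨0, by simp [hzero i, listPow]⟩⟩
  push Not at hzero
  obtain ⟨i₀, hi₀⟩ := hzero
  obtain ⟨d, -, hd, hdvd⟩ := (hL i₀).exists_period_forall_dvd (Nat.pos_of_ne_zero hi₀)
  refine ⟨(List.range d).map u, fun i => ⟨L i / d, ?_⟩⟩
  rw [← hd.map_range_mul_eq_listPow, Nat.div_mul_cancel (hdvd _ (hL i))]

theorem listPow_append_self {α : Type*} (l : List α) (n : ℕ) :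
    listPow l n ++ l = l ++ listPow l n := by
  induction n with
  | zero => simp [listPow]
  | succ n ih => rw [listPow, List.append_assoc, ih]

theorem reverse_listPow {α : Type*} (l : List α) (n : ℕ) :
    (listPow l n).reverse = listPow l.reverse n := by
  induction n with
  | zero => simp [listPow]
  | succ n ih => rw [listPow, List.reverse_append, ih, listPow, listPow_append_self]

theorem List.IsPrefix.getElem?_eq_getElem?_mod {α : Type*} {w t : List α} (h : w <+: t ++ w)
    (ht : 0 < t.length) {i : ℕ} (hi : i < w.length) : w[i]? = t[i % t.length]? := by
  induction i using Nat.strong_induction_on with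
  | _ i ih =>
    have hpre : w[i]? = (t ++ w)[i]? := by
      obtain ⟨s, hs⟩ := h
      rw [← hs, List.getElem?_append_left hi]
    rcases lt_or_ge i t.length with hit | hit
    · rw [hpre, List.getElem?_append_left hit, Nat.mod_eq_of_lt hit]
    · rw [hpre, List.getElem?_append_right hit, ih _ (by omega) (by omega),
        ← Nat.mod_eq_sub_mod hit]

section Conjugates

variable {A : Type*}

theorem cyclicMorphism_of_forall_exists_prefix {φ : A → List A}
    (h : ∀ N, ∃ w : List A, N < w.length ∧ ∀ a, w <+: φ a ++ w) : CyclicMorphism φ := by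
  by_cases hnil : ∀ a, φ a = []
  · exact ⟨[], fun a => ⟨0, hnil a⟩⟩
  push Not at hnil
  obtain ⟨a₀, ha₀⟩ := hnil
  have hpos₀ : 0 < (φ a₀).length := List.length_pos_iff.mpr ha₀
  let u : ℕ → A := fun i => (φ a₀)[i % (φ a₀).length]'(Nat.mod_lt _ hpos₀)
  have hu : ∀ a, φ a ≠ [] → ∀ i, (φ a)[i % (φ a).length]? = some (u i) := by
    intro a ha i
    obtain ⟨w, hw, hpre⟩ := h i
    rw [← (hpre a).getElem?_eq_getElem?_mod (List.length_pos_iff.mpr ha) hw,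
      (hpre a₀).getElem?_eq_getElem?_mod hpos₀ hw, List.getElem?_eq_getElem]
  have hperiodic : ∀ a, Periodic u (φ a).length := by
    intro a i
    by_cases ha : φ a = []
    · simp [ha]
    · apply Option.some.inj
      rw [← hu a ha, ← hu a ha, Nat.add_mod_right]
  have himage : ∀ a, φ a = (List.range (φ a).length).map u := by
    intro a
    refine List.ext_getElem? fun i => ?_
    rcases lt_or_ge i (φ a).length with hi | hi
    · rw [List.getElem?_map, List.getElem?_range hi, Option.map_some,
        ← hu a (List.ne_nil_of_length_pos (by omega)), Nat.mod_eq_of_lt hi]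
    · simp [hi]
  obtain ⟨r, hr⟩ := exists_forall_map_range_eq_listPow u (fun a => (φ a).length) hperiodic
  exact ⟨r, fun a => himage a ▸ hr a⟩

theorem exists_isLeftmostConjOf_of_bddAbove {φ : A → List A}
    (hbdd : BddAbove
      {n | ∃ (w : List A) (ψ : A → List A), (∀ a, w ++ ψ a = φ a ++ w) ∧ w.length = n}) :
    ∃ φL, IsLeftmostConjOf φL φ := by
  obtain ⟨w, φL, hφL, hw⟩ := Nat.sSup_mem (by exact ⟨0, [], φ, by simp, rfl⟩) hbdd
  refine ⟨φL, ⟨w, hφL⟩, fun ψ ⟨v, hv⟩ => ?_⟩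
  have hwv : ∀ a, (w ++ v) ++ ψ a = φ a ++ (w ++ v) := fun a => by
    rw [List.append_assoc, hv, ← List.append_assoc, hφL, List.append_assoc]
  have hle : w.length + v.length ≤ w.length := by
    rw [← List.length_append, hw]
    exact le_csSup hbdd ⟨_, _, hwv, rfl⟩
  have hv0 : v = [] := List.eq_nil_of_length_eq_zero (by omega)
  funext a
  simpa [hv0] using hv a

theorem exists_isLeftmostConjOf {φ : A → List A} (h : ¬ CyclicMorphism φ) :
    ∃ φL, IsLeftmostConjOf φL φ := by
  refine exists_isLeftmostConjOf_of_bddAbove ?_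
  contrapose! h
  refine cyclicMorphism_of_forall_exists_prefix fun N => ?_
  obtain ⟨_, ⟨w, ψ, hw, rfl⟩, hN⟩ := not_bddAbove_iff.1 h N
  exact ⟨w, hN, fun a => ⟨ψ a, hw a⟩⟩

def reverseMorphism (φ : A → List A) : A → List A := fun a => (φ a).reverse

@[simp]
theorem reverseMorphism_reverseMorphism (φ : A → List A) :
    reverseMorphism (reverseMorphism φ) = φ := by
  funext a
  simp [reverseMorphism]

theorem IsRightConjOf.reverse {φ ψ : A → List A} (h : IsRightConjOf φ ψ) :
    IsRightConjOf (reverseMorphism ψ) (reverseMorphism φ) := by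
  obtain ⟨w, hw⟩ := h
  refine ⟨w.reverse, fun a => ?_⟩
  simpa [reverseMorphism] using (congrArg List.reverse (hw a)).symm

theorem CyclicMorphism.of_reverseMorphism {φ : A → List A}
    (h : CyclicMorphism (reverseMorphism φ)) : CyclicMorphism φ := by
  obtain ⟨r, hr⟩ := h
  refine ⟨r.reverse, fun a => ?_⟩
  obtain ⟨n, hn⟩ := hr a
  exact ⟨n, by rw [← reverse_listPow, ← hn, reverseMorphism, List.reverse_reverse]⟩

theorem IsLeftmostConjOf.reverse {φL φ : A → List A}
    (h : IsLeftmostConjOf φL (reverseMorphism φ)) :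
    IsRightmostConjOf (reverseMorphism φL) φ := by
  refine ⟨by simpa using h.1.reverse, fun ψ hψ => ?_⟩
  rw [← h.2 _ (by simpa using hψ.reverse), reverseMorphism_reverseMorphism]

end Conjugates

theorem stmt6_general {A : Type*} (φ : A → List A) (h : ¬ CyclicMorphism φ) :
    (∃ φL : A → List A, IsLeftmostConjOf φL φ) ∧
    (∃ φR : A → List A, IsRightmostConjOf φR φ) := by
  obtain ⟨φL, hφL⟩ := exists_isLeftmostConjOf (mt CyclicMorphism.of_reverseMorphism h)
  exact ⟨exists_isLeftmostConjOf h, reverseMorphism φL, hφL.reverse⟩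

/-- An acyclic morphism has a leftmost and a rightmost conjugate. -/
theorem stmt6 {A : Type*} [Fintype A] (φ : A → List A) (h : ¬ CyclicMorphism φ) :
    (∃ φL : A → List A, IsLeftmostConjOf φL φ) ∧
    (∃ φR : A → List A, IsRightmostConjOf φR φ) :=
  stmt6_general φ h
end

section
/- Let φ be a primitive acyclic morphism with leftmost conjugate φ_L and rightmost conjugate φ_R, and let w be the conjugate word with wφ_L(x) = φ_R(x)w for all x. If u is a factor of a fixed point of φ, then φ_R(u)w is also a factor of that fixed point's language. -/
/-- A morphism is primitive if some power of it sends every letter to a word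
containing every letter. -/
def Primitive {A : Type*} (φ : A → List A) : Prop :=
  ∃ k : ℕ, ∀ a b : A, b ∈ morPow φ k a

/-!
Write `z φL = φ z` and `v φ = φR v`. Then `v z` conjugates `φL` to `φR` as `w` does, and two
distinct words conjugating `φL` to `φR` differ by a nonempty word commuting with every `φL(a)`;
this would make `φL`, hence its conjugate `φ`, cyclic, so `w = v z`. By primitivity `f` occurs
in the fixed point with a left context `p` longer than `v` and a right context `s` longer than
`z`. In the factor `φ(p f s)`, `v` is a suffix of `φ(p)` and `z` a prefix of `φ(s)`, so
`v φ(f) z = φR(f) v z = φR(f) w` is a factor.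
-/
section Words

variable {A : Type*}

theorem listPow_add (l : List A) (m n : ℕ) : listPow l (m + n) = listPow l m ++ listPow l n := by
  induction m with
  | zero => simp [listPow]
  | succ m ih => rw [Nat.add_right_comm, listPow, listPow, ih, List.append_assoc]

theorem length_listPow (l : List A) (n : ℕ) : (listPow l n).length = n * l.length := by
  induction n with
  | zero => simp [listPow]
  | succ n ih => simp only [listPow, List.length_append, ih]; ring

theorem listPow_listPow (l : List A) (k n : ℕ) : listPow (listPow l k) n = listPow l (n * k) := by
  induction n with
  | zero => simp [listPow]
  | succ n ih => rw [listPow, ih, ← listPow_add]; ring_nf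

theorem listPow_singleton (a : A) (n : ℕ) : listPow [a] n = List.replicate n a := by
  induction n with
  | zero => rfl
  | succ n ih => rw [listPow, ih]; rfl

theorem append_listPow_of_append_eq {c x y : List A} (h : c ++ x = y ++ c) (n : ℕ) :
    c ++ listPow x n = listPow y n ++ c := by
  induction n with
  | zero => simp [listPow]
  | succ n ih => rw [listPow, listPow, ← List.append_assoc, h, List.append_assoc, ih,
      List.append_assoc]

theorem prefix_of_append_eq {c x y : List A} (h : c ++ x = y ++ c) (hc : c.length ≤ y.length) :
    c <+: y :=
  List.prefix_of_prefix_length_le (h ▸ List.prefix_append c x) (List.prefix_append y c) hc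

theorem suffix_of_append_eq {c x y : List A} (h : c ++ x = y ++ c) (hc : c.length ≤ x.length) :
    c <:+ x :=
  List.suffix_of_suffix_length_le (h ▸ List.suffix_append y c) (List.suffix_append c x) hc

theorem prefix_listPow_of_append_eq {c x y : List A} (h : c ++ x = y ++ c) (hy : y ≠ [])
    {n : ℕ} (hn : c.length ≤ n) : c <+: listPow y n := by
  refine prefix_of_append_eq (append_listPow_of_append_eq h n) ?_
  rw [length_listPow]
  exact hn.trans (Nat.le_mul_of_pos_right n (List.length_pos_iff.2 hy))

theorem suffix_listPow_of_append_eq {c x y : List A} (h : c ++ x = y ++ c) (hx : x ≠ [])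
    {n : ℕ} (hn : c.length ≤ n) : c <:+ listPow x n := by
  refine suffix_of_append_eq (append_listPow_of_append_eq h n) ?_
  rw [length_listPow]
  exact hn.trans (Nat.le_mul_of_pos_right n (List.length_pos_iff.2 hx))

theorem exists_append_eq_of_suffix_listPow {z r : List A} {n : ℕ} (h : z <:+ listPow r n) :
    ∃ s, z ++ r = s ++ z := by
  have hr : listPow r n ++ r = r ++ listPow r n := by
    simpa [listPow] using (listPow_add r n 1).symm
  have hzr : z ++ r <:+ r ++ listPow r n := by
    obtain ⟨t, ht⟩ := h
    exact ⟨t, by rw [← hr, ← ht, List.append_assoc]⟩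
  obtain ⟨s, hs⟩ := List.suffix_of_suffix_length_le (h.trans (List.suffix_append r _)) hzr
    (by simp)
  exact ⟨s, hs.symm⟩

end Words

section Conjugation

variable {A : Type*}

/-- The common root is the shortest nonempty word commuting with `d`. -/
theorem exists_listPow_of_append_comm {d : List A} (hd : d ≠ []) :
    ∃ r : List A, ∀ x : List A, x ++ d = d ++ x → ∃ k, x = listPow r k := by
  classical
  have hex : ∃ n, ∃ r : List A, r.length = n ∧ r ≠ [] ∧ r ++ d = d ++ r := ⟨_, d, rfl, hd, rfl⟩
  obtain ⟨r, hrlen, hrne, hrd⟩ := Nat.find_spec hex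
  refine ⟨r, fun x hx => ?_⟩
  induction hlen : x.length using Nat.strong_induction_on generalizing x with
  | _ n ih =>
    rcases eq_or_ne x [] with rfl | hxne
    · exact ⟨0, rfl⟩
    have hrx : r.length ≤ x.length := hrlen ▸ Nat.find_min' hex ⟨x, rfl, hxne, hx⟩
    obtain ⟨x', rfl⟩ : r <+: x := List.prefix_of_prefix_length_le
      (prefix_listPow_of_append_eq hrd hd (n := r.length + x.length) (by omega))
      (prefix_listPow_of_append_eq hx hd (by omega)) hrx
    have hx' : x' ++ d = d ++ x' := by
      refine List.append_cancel_left (as := r) ?_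
      calc r ++ (x' ++ d) = d ++ (r ++ x') := by rw [← hx, List.append_assoc]
        _ = r ++ (d ++ x') := by rw [← List.append_assoc, ← hrd, List.append_assoc]
    have hlt : x'.length < n := by
      rw [← hlen, List.length_append]
      have := List.length_pos_iff.2 hrne
      omega
    obtain ⟨k, rfl⟩ := ih _ hlt x' hx' rfl
    exact ⟨k + 1, rfl⟩

theorem CyclicMorphism.of_append_comm {ψ : A → List A} {d : List A} (hd : d ≠ [])
    (h : ∀ a, ψ a ++ d = d ++ ψ a) : CyclicMorphism ψ :=
  let ⟨r, hr⟩ := exists_listPow_of_append_comm hd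
  ⟨r, fun a => hr _ (h a)⟩

theorem nontrivial_of_not_cyclicMorphism {φ : A → List A} (h : ¬ CyclicMorphism φ) :
    Nontrivial A := by
  by_contra hA
  rw [not_nontrivial_iff_subsingleton] at hA
  apply h
  rcases isEmpty_or_nonempty A with hA' | hA'
  · exact ⟨[], fun b => isEmptyElim b⟩
  · obtain ⟨a⟩ := hA'
    refine ⟨[a], fun b => ⟨(φ b).length, ?_⟩⟩
    rw [listPow_singleton]
    exact List.eq_replicate_iff.2 ⟨rfl, fun c _ => Subsingleton.elim c a⟩

def IsConjugator (c : List A) (ψ χ : A → List A) : Prop :=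
  ∀ a, c ++ ψ a = χ a ++ c

namespace IsConjugator

variable {c d : List A} {ψ χ ρ : A → List A}

theorem trans (h₁ : IsConjugator c ψ χ) (h₂ : IsConjugator d χ ρ) :
    IsConjugator (d ++ c) ψ ρ := fun a => by
  rw [List.append_assoc, h₁ a, ← List.append_assoc, h₂ a, List.append_assoc]

theorem length_eq (h : IsConjugator c ψ χ) (a : A) : (χ a).length = (ψ a).length := by
  have := congrArg List.length (h a)
  simp only [List.length_append] at this
  omega

theorem append_wordMap (h : IsConjugator c ψ χ) (x : List A) :
    c ++ wordMap ψ x = wordMap χ x ++ c := by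
  induction x with
  | nil => simp [wordMap]
  | cons a x ih =>
    simp only [wordMap, List.flatMap_cons] at ih ⊢
    rw [← List.append_assoc, h a, List.append_assoc, ih, List.append_assoc]

theorem prefix_or_prefix (h₁ : IsConjugator c ψ χ) (h₂ : IsConjugator d ψ χ) {a : A}
    (ha : χ a ≠ []) : c <+: d ∨ d <+: c :=
  List.prefix_or_prefix_of_prefix
    (prefix_listPow_of_append_eq (h₁ a) ha (n := c.length + d.length) (by omega))
    (prefix_listPow_of_append_eq (h₂ a) ha (by omega))

theorem eq_or_cyclicMorphism (h₁ : IsConjugator c ψ χ) (h₂ : IsConjugator d ψ χ) {a : A}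
    (ha : χ a ≠ []) : c = d ∨ CyclicMorphism ψ := by
  wlog hcd : c <+: d generalizing c d
  · exact ((h₁.prefix_or_prefix h₂ ha).resolve_left hcd |> this h₂ h₁).imp Eq.symm id
  obtain ⟨e, rfl⟩ := hcd
  rcases eq_or_ne e [] with rfl | he
  · simp
  refine .inr (.of_append_comm he fun b => List.append_cancel_left (as := c) ?_)
  calc c ++ (ψ b ++ e) = χ b ++ c ++ e := by rw [← List.append_assoc, h₁ b]
    _ = c ++ (e ++ ψ b) := by rw [List.append_assoc, ← h₂ b, List.append_assoc]

end IsConjugator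

theorem CyclicMorphism.of_isConjugator {z : List A} {ψ φ : A → List A}
    (h : IsConjugator z ψ φ) (hψ : CyclicMorphism ψ) : CyclicMorphism φ := by
  obtain ⟨r, hr⟩ := hψ
  choose n hn using hr
  by_cases hψ0 : ∀ a, ψ a = []
  · refine ⟨[], fun a => ⟨0, List.eq_nil_of_length_eq_zero ?_⟩⟩
    rw [h.length_eq, hψ0]
    rfl
  obtain ⟨a, ha⟩ := not_forall.1 hψ0
  have hz : z <:+ listPow r (z.length * n a) := by
    rw [← listPow_listPow, ← hn a]
    exact suffix_listPow_of_append_eq (h a) ha le_rfl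
  obtain ⟨s, hs⟩ := exists_append_eq_of_suffix_listPow hz
  refine ⟨s, fun b => ⟨n b, List.append_cancel_right (bs := z) ?_⟩⟩
  rw [← h b, hn b, append_listPow_of_append_eq hs]

end Conjugation

section Morphisms

variable {A : Type*} {φ ψ : A → List A}

@[simp]
theorem wordMap_append (ψ : A → List A) (x y : List A) :
    wordMap ψ (x ++ y) = wordMap ψ x ++ wordMap ψ y :=
  List.flatMap_append

theorem morPow_add (φ : A → List A) (j k : ℕ) (a : A) :
    morPow φ (j + k) a = wordMap (morPow φ j) (morPow φ k a) := by
  induction k generalizing a with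
  | zero => simp [morPow, wordMap]
  | succ k ih =>
    simp only [morPow, wordMap, List.flatMap_assoc]
    exact congrArg (List.flatMap · (φ a)) (funext ih)

theorem wordMap_morPow_succ (φ : A → List A) (k : ℕ) (x : List A) :
    wordMap (morPow φ (k + 1)) x = wordMap (morPow φ k) (wordMap φ x) :=
  List.flatMap_assoc.symm

theorem length_mul_le_length_wordMap {c : ℕ} (h : ∀ a, c ≤ (ψ a).length) (x : List A) :
    x.length * c ≤ (wordMap ψ x).length := by
  induction x with
  | nil => simp
  | cons a x ih =>
    simp only [wordMap, List.flatMap_cons, List.length_cons, List.length_append] at ih ⊢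
    have := h a
    nlinarith

theorem length_le_length_wordMap (h : ∀ a, ψ a ≠ []) (x : List A) :
    x.length ≤ (wordMap ψ x).length := by
  simpa using length_mul_le_length_wordMap (fun a => List.length_pos_iff.2 (h a)) x

theorem morPow_ne_nil (h : ∀ a, φ a ≠ []) (k : ℕ) (a : A) : morPow φ k a ≠ [] := by
  induction k generalizing a with
  | zero => simp [morPow]
  | succ k ih =>
    rw [morPow, ← List.length_pos_iff]
    exact (List.length_pos_iff.2 (h a)).trans_le (length_le_length_wordMap ih _)

namespace Primitive

variable [Nontrivial A]

theorem ne_nil (hφ : Primitive φ) (a : A) : φ a ≠ [] := by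
  obtain ⟨k, hk⟩ := hφ
  intro ha
  cases k with
  | zero =>
    obtain ⟨b, hb⟩ := exists_ne a
    simpa [morPow, hb] using hk a b
  | succ k => simpa [morPow, ha, wordMap] using hk a a

theorem exists_le_length_morPow (hφ : Primitive φ) (c : ℕ) :
    ∃ K, ∀ a, c ≤ (morPow φ K a).length := by
  obtain ⟨k, hk⟩ := hφ
  have two_le : ∀ a, 2 ≤ (morPow φ k a).length := fun a => by
    obtain ⟨b₁, b₂, hb⟩ := exists_pair_ne A
    have h₁ := hk a b₁
    have h₂ := hk a b₂
    generalize morPow φ k a = l at h₁ h₂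
    rcases l with _ | ⟨x, _ | ⟨y, t⟩⟩ <;> simp_all
  have pow_le : ∀ m a, 2 ^ m ≤ (morPow φ (m * k) a).length := by
    intro m
    induction m with
    | zero => simp [morPow]
    | succ m ih =>
      intro a
      rw [Nat.succ_mul, morPow_add, pow_succ']
      exact (Nat.mul_le_mul_right _ (two_le a)).trans (length_mul_le_length_wordMap ih _)
  exact ⟨c * k, fun a => Nat.lt_two_pow_self.le.trans (pow_le c a)⟩

end Primitive

end Morphisms

section FixedPoint

variable {A : Type*} {u : ℕ → A}

/-- For non-erasing `ψ` this says `ψ(u) = u`. -/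
def PreservesPrefixes (ψ : A → List A) (u : ℕ → A) : Prop :=
  ∀ n, ∃ m, wordMap ψ ((List.range n).map u) = (List.range m).map u

theorem map_range_prefix_map_range (u : ℕ → A) {n m : ℕ} (h : n ≤ m) :
    (List.range n).map u <+: (List.range m).map u := by
  obtain ⟨k, rfl⟩ := Nat.exists_eq_add_of_le h
  rw [List.range_add, List.map_append]
  exact List.prefix_append _ _

theorem isFactor_iff_exists_infix {v : List A} :
    IsFactor u v ↔ ∃ n, v <:+: (List.range n).map u := by
  constructor
  · rintro ⟨i, hi⟩
    refine ⟨i + v.length, (List.range i).map u, [], ?_⟩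
    rw [List.append_nil, List.range_add, List.map_append, List.map_map]
    exact congrArg _ hi
  · rintro ⟨n, s, t, h⟩
    refine ⟨s.length, List.ext_getElem (by simp) fun j hj _ => ?_⟩
    have hlt : s.length + j < ((List.range n).map u).length := by
      rw [← h]
      simp only [List.length_append]
      omega
    have := List.getElem_of_eq h.symm hlt
    rw [List.getElem_append_left (by simp [hj]), List.getElem_append_right (by simp)] at this
    simpa using this.symm

theorem IsFactor.of_infix {x y : List A} (hy : IsFactor u y) (hxy : x <:+: y) : IsFactor u x :=
  let ⟨n, hn⟩ := isFactor_iff_exists_infix.1 hy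
  isFactor_iff_exists_infix.2 ⟨n, hxy.trans hn⟩

theorem isFactor_map_range (u : ℕ → A) (n : ℕ) : IsFactor u ((List.range n).map u) :=
  isFactor_iff_exists_infix.2 ⟨n, List.infix_refl _⟩

theorem IsFactor.exists_append_right {x : List A} (hx : IsFactor u x) (N : ℕ) :
    ∃ s, N ≤ s.length ∧ IsFactor u (x ++ s) := by
  obtain ⟨i, hi⟩ := hx
  refine ⟨(List.range N).map fun j => u (i + x.length + j), by simp, i, ?_⟩
  rw [List.length_append, List.length_map, List.length_range, List.range_add, List.map_append,
    List.map_map, ← hi]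
  simp only [Function.comp_def, Nat.add_assoc]

theorem PreservesPrefixes.morPow {φ : A → List A} (h : PreservesPrefixes φ u) (k : ℕ) :
    PreservesPrefixes (morPow φ k) u := by
  induction k with
  | zero => exact fun n => ⟨n, by simp [_root_.morPow, wordMap]⟩
  | succ k ih =>
    intro n
    obtain ⟨m, hm⟩ := h n
    obtain ⟨m', hm'⟩ := ih m
    exact ⟨m', by rw [wordMap_morPow_succ, hm, hm']⟩

theorem IsFactor.wordMap {ψ : A → List A} (hψ : PreservesPrefixes ψ u) {x : List A}
    (hx : IsFactor u x) : IsFactor u (wordMap ψ x) := by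
  obtain ⟨n, s, t, h⟩ := isFactor_iff_exists_infix.1 hx
  obtain ⟨m, hm⟩ := hψ n
  exact isFactor_iff_exists_infix.2 ⟨m, _root_.wordMap ψ s, _root_.wordMap ψ t, by
    rw [← hm, ← h, wordMap_append, wordMap_append]⟩

/-- `f` lies in the prefix `φᴷ(u₀)`, which occurs in `φᴷ⁺ᵏ(u_N)` since `u₀` occurs in `φᵏ(u_N)`. -/
theorem IsFactor.exists_append_left [Nontrivial A] {φ : A → List A} (hφ : Primitive φ)
    (hfix : PreservesPrefixes φ u) {f : List A} (hf : IsFactor u f) (N : ℕ) :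
    ∃ p, N ≤ p.length ∧ IsFactor u (p ++ f) := by
  obtain ⟨n, hn⟩ := isFactor_iff_exists_infix.1 hf
  obtain ⟨K, hK⟩ := hφ.exists_le_length_morPow n
  have ⟨k, hk⟩ := hφ
  have hfK : f <:+: morPow φ K (u 0) := by
    obtain ⟨M, hM⟩ := hfix.morPow K 1
    have hM' : morPow φ K (u 0) = (List.range M).map u := by simpa [_root_.wordMap] using hM
    have hnM : n ≤ M := by simpa [hM'] using hK (u 0)
    exact hM' ▸ hn.trans (map_range_prefix_map_range u hnM).isInfix
  obtain ⟨α, β, hαβ⟩ : f <:+: morPow φ (K + k) (u N) := by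
    rw [morPow_add]
    exact hfK.trans (List.infix_flatMap_of_mem (hk _ _) _)
  refine ⟨_root_.wordMap (morPow φ (K + k)) ((List.range N).map u) ++ α, ?_, ?_⟩
  · have := length_le_length_wordMap (morPow_ne_nil hφ.ne_nil (K + k)) ((List.range N).map u)
    simp only [List.length_map, List.length_range] at this
    simp only [List.length_append]
    omega
  · refine ((isFactor_map_range u (N + 1)).wordMap (hfix.morPow (K + k))).of_infix ⟨[], β, ?_⟩
    rw [List.range_succ, List.map_append, wordMap_append]
    simp [_root_.wordMap, ← hαβ]

end FixedPoint

theorem stmt11_general {A : Type*} (φ φL φR : A → List A) (w : List A)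
    (u : ℕ → A)
    (hprim : Primitive φ) (hacyc : ¬ CyclicMorphism φ)
    (hL : IsLeftmostConjOf φL φ) (hR : IsRightmostConjOf φR φ)
    (hw : ∀ a : A, w ++ φL a = φR a ++ w)
    (hfix : ∀ n : ℕ, ∃ m : ℕ,
      wordMap φ ((List.range n).map u) = (List.range m).map u)
    (f : List A) (hf : IsFactor u f) :
    IsFactor u (wordMap φR f ++ w) := by
  have : Nontrivial A := nontrivial_of_not_cyclicMorphism hacyc
  have hne := hprim.ne_nil
  obtain ⟨z, hz⟩ : ∃ z, IsConjugator z φL φ := hL.1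
  obtain ⟨v, hv⟩ : ∃ v, IsConjugator v φ φR := hR.1
  have hw_eq : w = v ++ z := by
    have ha : φR (u 0) ≠ [] :=
      List.ne_nil_of_length_pos (hv.length_eq _ ▸ List.length_pos_iff.2 (hne _))
    exact (IsConjugator.eq_or_cyclicMorphism hw (hz.trans hv) ha).resolve_right
      fun h => hacyc (h.of_isConjugator hz)
  obtain ⟨p, hp, hpf⟩ := hf.exists_append_left hprim hfix v.length
  obtain ⟨s, hs, hpfs⟩ := hpf.exists_append_right z.length
  obtain ⟨η, hη⟩ : v <:+ wordMap φ p :=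
    suffix_of_append_eq (hv.append_wordMap p) (hp.trans (length_le_length_wordMap hne p))
  obtain ⟨ξ, hξ⟩ : z <+: wordMap φ s :=
    prefix_of_append_eq (hz.append_wordMap s) (hs.trans (length_le_length_wordMap hne s))
  refine (hpfs.wordMap hfix).of_infix ⟨η, ξ, ?_⟩
  rw [wordMap_append, wordMap_append, ← hη, ← hξ, hw_eq]
  simp only [← List.append_assoc]
  rw [List.append_assoc η v, hv.append_wordMap f, ← List.append_assoc]

/-- For a primitive acyclic morphism φ with leftmost conjugate φL, rightmost
conjugate φR and conjugate word w (w φL(x) = φR(x) w), if u is a factor of a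
fixed point of φ then φR(u)w is a factor as well. -/
theorem stmt11 {A : Type*} [Fintype A] (φ φL φR : A → List A) (w : List A)
    (u : ℕ → A)
    (hprim : Primitive φ) (hacyc : ¬ CyclicMorphism φ)
    (hL : IsLeftmostConjOf φL φ) (hR : IsRightmostConjOf φR φ)
    (hw : ∀ a : A, w ++ φL a = φR a ++ w)
    (hfix : ∀ n : ℕ, ∃ m : ℕ,
      wordMap φ ((List.range n).map u) = (List.range m).map u)
    (f : List A) (hf : IsFactor u f) :
    IsFactor u (wordMap φR f ++ w) :=
  stmt11_general φ φL φR w u hprim hacyc hL hR hw hfix f hf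
end
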